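/- arXiv:2604.19409 — 7 statements merged into one kernel-verified Lean document; each statement's English description precedes it below -/
import Mathlib

section
/- Let r ≥ 3, r ≤ k ≤ 2r-2, and 0 ≤ j ≤ 2r-k-1. If a graph G is 2K_r-free, then any k-clique and any (k+j)-clique of G share at least 2k-2r+1+j vertices. -/
/-!
If a `k`-clique `s` and a `(k+j)`-clique `t` shared fewer than `2k-2r+1+j` vertices, their union
would have at least `2r` vertices. An `r`-subset `A` of `s` that either avoids `t` or contains
all of `s \ t` leaves at least `r` vertices of `t` outside `A`, so `A` and an `r`-subset of `t \ A`
are two disjoint `r`-cliques.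
-/

open Finset

namespace Finset

variable {α : Type*} [DecidableEq α] {s t : Finset α} {r : ℕ}

theorem exists_disjoint_subsets_card_eq (hs : r ≤ #s) (ht : r ≤ #t) (hst : 2 * r ≤ #(s ∪ t)) :
    ∃ A ⊆ s, ∃ B ⊆ t, #A = r ∧ #B = r ∧ Disjoint A B := by
  obtain ⟨A, hAs, hAr, hA⟩ : ∃ A ⊆ s, #A = r ∧ r ≤ #(t \ A) := by
    by_cases hst' : r ≤ #(s \ t)
    · obtain ⟨A, hA, hAr⟩ := exists_subset_card_eq hst'
      have hAt : Disjoint t A := disjoint_of_subset_right hA disjoint_sdiff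
      exact ⟨A, hA.trans sdiff_subset, hAr, by rwa [sdiff_eq_self_of_disjoint hAt]⟩
    · obtain ⟨A, hA, hAs, hAr⟩ :=
        exists_subsuperset_card_eq sdiff_subset (le_of_not_ge hst') hs
      have hunion : t ∪ A = s ∪ t := by
        refine (union_subset subset_union_right (hAs.trans subset_union_left)).antisymm ?_
        rw [← sdiff_union_self_eq_union]
        exact union_subset (hA.trans subset_union_right) subset_union_left
      have hcard := card_sdiff_add_card t A
      rw [hunion] at hcard
      exact ⟨A, hAs, hAr, by omega⟩
  obtain ⟨B, hB, hBr⟩ := exists_subset_card_eq hA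
  exact ⟨A, hAs, B, hB.trans sdiff_subset, hAr, hBr, disjoint_of_subset_right hB disjoint_sdiff⟩

end Finset

theorem SimpleGraph.IsClique.exists_disjoint_isNClique {V : Type*} [DecidableEq V]
    {G : SimpleGraph V} {s t : Finset V} {r : ℕ} (hs : G.IsClique s) (ht : G.IsClique t)
    (hsr : r ≤ #s) (htr : r ≤ #t) (hst : 2 * r ≤ #(s ∪ t)) :
    ∃ A B, G.IsNClique r A ∧ G.IsNClique r B ∧ Disjoint A B := by
  obtain ⟨A, hA, B, hB, hAr, hBr, hAB⟩ := exists_disjoint_subsets_card_eq hsr htr hst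
  exact ⟨A, B, ⟨hs.subset hA, hAr⟩, ⟨ht.subset hB, hBr⟩, hAB⟩

theorem stmt2_general {V : Type*} [DecidableEq V] (G : SimpleGraph V) (r k j : ℕ)
    (hrk : r ≤ k)
    (hfree : ¬ ∃ s t : Finset V, G.IsNClique r s ∧ G.IsNClique r t ∧ Disjoint s t) :
    ∀ s t : Finset V, G.IsNClique k s → G.IsNClique (k + j) t →
      2 * k - 2 * r + 1 + j ≤ (s ∩ t).card := by
  intro s t hs ht
  by_contra! hsmall
  have hunion := card_union_add_card_inter s t
  rw [hs.card_eq, ht.card_eq] at hunion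
  exact hfree <| hs.isClique.exists_disjoint_isNClique ht.isClique
    (by rw [hs.card_eq]; omega) (by rw [ht.card_eq]; omega) (by omega)

/-- Let r ≥ 3, r ≤ k ≤ 2r-2 and 0 ≤ j ≤ 2r-k-1. If G is 2K_r-free, then any
k-clique and any (k+j)-clique of G share at least 2k-2r+1+j vertices. -/
theorem stmt2 {V : Type*} [DecidableEq V] (G : SimpleGraph V) (r k j : ℕ)
    (hr : 3 ≤ r) (hrk : r ≤ k) (hk : k ≤ 2 * r - 2) (hj : j ≤ 2 * r - k - 1)
    (hfree : ¬ ∃ s t : Finset V, G.IsNClique r s ∧ G.IsNClique r t ∧ Disjoint s t) :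
    ∀ s t : Finset V, G.IsNClique k s → G.IsNClique (k + j) t →
      2 * k - 2 * r + 1 + j ≤ (s ∩ t).card :=
  stmt2_general G r k j hrk hfree
end

section
/- For integers r and k with r ≤ k ≤ 2r-2, the function l ↦ ⌊(k - l)/(2k - 2r + 1 - l)⌋ is monotonically increasing in l on the range 0 ≤ l ≤ 2k-2r, and for all l in this range, ⌊(k - l)/(2k - 2r + 1 - l)⌋ ≤ 2r - k. -/
/-- For r ≤ k ≤ 2r-2, the function l ↦ ⌊(k-l)/(2k-2r+1-l)⌋ is monotonically
increasing on 0 ≤ l ≤ 2k-2r, and on this range it is bounded above by 2r-k.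
(Natural number division is floor division.) -/
theorem stmt3 (r k : ℕ) (hrk : r ≤ k) (hk : k ≤ 2 * r - 2) :
    (∀ l₁ l₂ : ℕ, l₁ ≤ l₂ → l₂ ≤ 2 * k - 2 * r →
      (k - l₁) / (2 * k - 2 * r + 1 - l₁) ≤ (k - l₂) / (2 * k - 2 * r + 1 - l₂)) ∧
    (∀ l : ℕ, l ≤ 2 * k - 2 * r →
      (k - l) / (2 * k - 2 * r + 1 - l) ≤ 2 * r - k) := by
  rcases Nat.eq_zero_or_pos r with hr | hr
  · have hk0 : k = 0 := by omega
    subst hr hk0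
    constructor
    · intro l₁ l₂ h12 h2
      simp_all
    · intro l hl
      simp_all
  · have hr2 : 2 ≤ r := by
      rcases Nat.lt_or_ge r 2 with h | h
      · interval_cases r <;> omega
      · exact h
    have key : ∀ l, l ≤ 2 * k - 2 * r →
        k - l = (2 * r - k - 1) + (2 * k - 2 * r + 1 - l) := by
      intro l hl; omega
    have keyd : ∀ l, l ≤ 2 * k - 2 * r →
        (k - l) / (2 * k - 2 * r + 1 - l)
          = (2 * r - k - 1) / (2 * k - 2 * r + 1 - l) + 1 := by
      intro l hl
      rw [key l hl, Nat.add_div_right _ (by omega)]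
    constructor
    · intro l₁ l₂ h12 h2
      rw [keyd l₁ (le_trans h12 h2), keyd l₂ h2]
      exact Nat.add_le_add_right (Nat.div_le_div_left (by omega) (by omega)) 1
    · intro l hl
      rw [keyd l hl]
      have := Nat.div_le_self (2 * r - k - 1) (2 * k - 2 * r + 1 - l)
      omega
end

section
/- Let G be a 2K_3-free, K_4-free graph on n ≥ 6 vertices with a triangle T = {u,v,w} such that every edge lies in a triangle, and suppose some two edges of G - T lie in triangles with two different vertices of T. Then the total number of triangles of G is at most 3n - 12. -/
open Finset

set_option linter.unusedSectionVars false
set_option maxHeartbeats 1600000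

section Stmt10Aux

variable {V : Type*} [Fintype V] [DecidableEq V]

private lemma k4_apex (G : SimpleGraph V) (hK4 : G.CliqueFree 4) {T : Finset V}
    (hT : G.IsNClique 3 T) {z : V} (hz : z ∉ T) (hadj : ∀ p ∈ T, G.Adj z p) : False := by
  refine hK4 (insert z T) ⟨?_, ?_⟩
  · intro p hp q hq hpq
    simp only [coe_insert, Set.mem_insert_iff, mem_coe] at hp hq
    rcases hp with rfl | hp <;> rcases hq with rfl | hq
    · exact absurd rfl hpq
    · exact hadj q hq
    · exact (hadj p hp).symm
    · exact hT.1 hp hq hpq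
  · rw [card_insert_of_notMem hz, hT.2]

private lemma mem_Dset (G : SimpleGraph V) [DecidableRel G.Adj] {T : Finset V} {x a b : V}
    (hxT : x ∈ T) (haT : a ∉ T) (hbT : b ∉ T)
    (hxa : G.Adj x a) (hxb : G.Adj x b) (hab : G.Adj a b) :
    ({x, a, b} : Finset V) ∈ (G.cliqueFinset 3).filter (fun t => t ∩ T = {x}) := by
  rw [mem_filter, SimpleGraph.mem_cliqueFinset_iff, SimpleGraph.is3Clique_triple_iff]
  refine ⟨⟨hxa, hxb, hab⟩, ?_⟩
  ext c
  simp only [mem_inter, mem_insert, mem_singleton]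
  constructor
  · rintro ⟨rfl | rfl | rfl, hcT⟩
    · rfl
    · exact absurd hcT haT
    · exact absurd hcT hbT
  · rintro rfl
    exact ⟨Or.inl rfl, hxT⟩


private lemma k4_helper (G : SimpleGraph V) (hK4 : G.CliqueFree 4) {a b c d : V}
    (hab : G.Adj a b) (hac : G.Adj a c) (had : G.Adj a d)
    (hbc : G.Adj b c) (hbd : G.Adj b d) (hcd : G.Adj c d) : False := by
  refine hK4 {a, b, c, d} ⟨?_, ?_⟩
  · intro p hp q hq hpq
    simp only [coe_insert, Set.mem_insert_iff, coe_singleton, Set.mem_singleton_iff] at hp hq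
    rcases hp with rfl | rfl | rfl | rfl <;> rcases hq with rfl | rfl | rfl | rfl <;>
      first
        | exact absurd rfl hpq
        | assumption
        | exact hab.symm
        | exact hac.symm
        | exact had.symm
        | exact hbc.symm
        | exact hbd.symm
        | exact hcd.symm
  · rw [card_insert_of_notMem (by simp [hab.ne, hac.ne, had.ne]),
      card_insert_of_notMem (by simp [hbc.ne, hbd.ne]),
      card_insert_of_notMem (by simp [hcd.ne]), card_singleton]

private lemma tri_struct (G : SimpleGraph V) [DecidableRel G.Adj] {T : Finset V} {x : V}
    {t : Finset V} (ht : t ∈ G.cliqueFinset 3) (hint : t ∩ T = {x}) :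
    ∃ a b : V, a ≠ b ∧ a ≠ x ∧ b ≠ x ∧ a ∉ T ∧ b ∉ T ∧ t = {x, a, b} ∧
      G.Adj x a ∧ G.Adj x b ∧ G.Adj a b := by
  rw [SimpleGraph.mem_cliqueFinset_iff] at ht
  have hxt : x ∈ t := by
    have : x ∈ t ∩ T := hint ▸ mem_singleton_self x
    exact (mem_inter.1 this).1
  have hcard : (t.erase x).card = 2 := by
    rw [card_erase_of_mem hxt, ht.2]
  obtain ⟨a, b, hab, hE⟩ := card_eq_two.1 hcard
  have hae : a ∈ t.erase x := hE ▸ mem_insert_self a {b}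
  have hbe : b ∈ t.erase x := hE ▸ mem_insert_of_mem (mem_singleton_self b)
  have hat : a ∈ t := mem_of_mem_erase hae
  have hbt : b ∈ t := mem_of_mem_erase hbe
  have hax : a ≠ x := ne_of_mem_erase hae
  have hbx : b ≠ x := ne_of_mem_erase hbe
  have hnotT : ∀ c ∈ t, c ≠ x → c ∉ T := by
    intro c hc hcx hcT
    exact hcx (mem_singleton.1 (hint ▸ mem_inter.2 ⟨hc, hcT⟩))
  refine ⟨a, b, hab, hax, hbx, hnotT a hat hax, hnotT b hbt hbx, ?_,
    ht.1 hxt hat (Ne.symm hax), ht.1 hxt hbt (Ne.symm hbx), ht.1 hat hbt hab⟩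
  rw [← insert_erase hxt, hE]

private lemma choose_eq {r : V} : ∀ (s : Finset V) (h : s.Nonempty), s = {r} → h.choose = r := by
  intro s h hs
  subst hs
  simpa using h.choose_spec

private lemma D_bound (G : SimpleGraph V) [DecidableRel G.Adj]
    (h2K3 : ¬ ∃ s t : Finset V, G.IsNClique 3 s ∧ G.IsNClique 3 t ∧ Disjoint s t)
    (hK4 : G.CliqueFree 4) {T : Finset V} (hT3 : T.card = 3)
    {x y : V} (hxT : x ∈ T) (hyT : y ∈ T) (hxy : x ≠ y) (hadjxy : G.Adj x y)
    (hne : ((G.cliqueFinset 3).filter (fun t => t ∩ T = {x})).Nonempty) :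
    ((G.cliqueFinset 3).filter (fun t => t ∩ T = {y})).card ≤ Fintype.card V - 5 := by
  classical
  obtain ⟨t0, ht0m⟩ := hne
  rw [mem_filter] at ht0m
  obtain ⟨ht0c, ht0i⟩ := ht0m
  obtain ⟨a0, b0, hab0, ha0x, hb0x, ha0T, hb0T, ht0eq, hxa0, hxb0, ha0b0⟩ :=
    tri_struct G ht0c ht0i
  have ht0nc : G.IsNClique 3 t0 := (SimpleGraph.mem_cliqueFinset_iff).1 ht0c
  -- key structural fact for members of D y
  have key : ∀ t' ∈ (G.cliqueFinset 3).filter (fun t => t ∩ T = {y}),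
      ∃ c r : V, (c = a0 ∨ c = b0) ∧ r ∉ T ∧ r ≠ a0 ∧ r ≠ b0 ∧ r ≠ y ∧
        t' = {y, c, r} ∧ t' \ {y, a0, b0} = {r} ∧
        G.Adj y c ∧ G.Adj y r ∧ G.Adj c r := by
    intro t' ht'm
    rw [mem_filter] at ht'm
    obtain ⟨ht'c, ht'i⟩ := ht'm
    obtain ⟨a, b, hab, hay, hby, haT, hbT, ht'eq, hya, hyb, hab'⟩ :=
      tri_struct G ht'c ht'i
    have ht'nc : G.IsNClique 3 t' := (SimpleGraph.mem_cliqueFinset_iff).1 ht'c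
    have hnd : ¬ Disjoint t0 t' := fun hd => h2K3 ⟨t0, t', ht0nc, ht'nc, hd⟩
    obtain ⟨e, he0, he'⟩ := not_disjoint_iff.1 hnd
    have hex : e ≠ x := by
      intro h
      have : x ∈ t' ∩ T := mem_inter.2 ⟨h ▸ he', hxT⟩
      rw [ht'i, mem_singleton] at this
      exact hxy this
    have hey : e ≠ y := by
      intro h
      have : y ∈ t0 ∩ T := mem_inter.2 ⟨h ▸ he0, hyT⟩
      rw [ht0i, mem_singleton] at this
      exact hxy this.symm
    have he0' : e = a0 ∨ e = b0 := by
      rw [ht0eq] at he0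
      simp only [mem_insert, mem_singleton] at he0
      tauto
    have he'' : e = a ∨ e = b := by
      rw [ht'eq] at he'
      simp only [mem_insert, mem_singleton] at he'
      tauto
    -- not both of a, b in {a0, b0}
    have hnotboth : ¬ ((a = a0 ∨ a = b0) ∧ (b = a0 ∨ b = b0)) := by
      rintro ⟨ha, hb⟩
      have hya0 : G.Adj y a0 := by
        rcases ha with rfl | rfl
        · exact hya
        · rcases hb with rfl | rfl
          · exact hyb
          · exact absurd rfl hab
      have hyb0 : G.Adj y b0 := by
        rcases hb with rfl | rfl
        · rcases ha with rfl | rfl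
          · exact absurd rfl hab
          · exact hya
        · exact hyb
      exact k4_helper G hK4 hadjxy hxa0 hxb0 hya0 hyb0 ha0b0
    rcases he'' with h | h
    · -- e = a, so a ∈ {a0,b0}, r := b
      rw [h] at he0'
      have hb1 : b ≠ a0 := fun hh => hnotboth ⟨he0', Or.inl hh⟩
      have hb2 : b ≠ b0 := fun hh => hnotboth ⟨he0', Or.inr hh⟩
      refine ⟨a, b, he0', hbT, hb1, hb2, hby, ht'eq, ?_, hya, hyb, hab'⟩
      ext d
      simp only [ht'eq, mem_sdiff, mem_insert, mem_singleton]
      constructor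
      · rintro ⟨rfl | rfl | rfl, hnot⟩
        · exact absurd (Or.inl rfl) hnot
        · rcases he0' with rfl | rfl
          · exact absurd (Or.inr (Or.inl rfl)) hnot
          · exact absurd (Or.inr (Or.inr rfl)) hnot
        · rfl
      · rintro rfl
        exact ⟨Or.inr (Or.inr rfl), by push_neg; exact ⟨hby, hb1, hb2⟩⟩
    · -- e = b, so b ∈ {a0,b0}, r := a
      rw [h] at he0'
      have ha1 : a ≠ a0 := fun hh => hnotboth ⟨Or.inl hh, he0'⟩
      have ha2 : a ≠ b0 := fun hh => hnotboth ⟨Or.inr hh, he0'⟩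
      have ht'eq2 : t' = {y, b, a} := by
        rw [ht'eq]
        ext d
        simp only [mem_insert, mem_singleton]
        tauto
      refine ⟨b, a, he0', haT, ha1, ha2, hay, ht'eq2, ?_, hyb, hya, hab'.symm⟩
      ext d
      simp only [ht'eq, mem_sdiff, mem_insert, mem_singleton]
      constructor
      · rintro ⟨rfl | rfl | rfl, hnot⟩
        · exact absurd (Or.inl rfl) hnot
        · rfl
        · rcases he0' with rfl | rfl
          · exact absurd (Or.inr (Or.inl rfl)) hnot
          · exact absurd (Or.inr (Or.inr rfl)) hnot
      · rintro rfl
        exact ⟨Or.inr (Or.inl rfl), by push_neg; exact ⟨hay, ha1, ha2⟩⟩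
  -- the injection
  have hRcard : (univ \ (T ∪ {a0, b0})).card = Fintype.card V - 5 := by
    have hdisj : Disjoint T ({a0, b0} : Finset V) := by
      rw [disjoint_right]
      intro c hc
      simp only [mem_insert, mem_singleton] at hc
      rcases hc with rfl | rfl
      · exact ha0T
      · exact hb0T
    rw [card_sdiff_of_subset (subset_univ _), card_univ, card_union_of_disjoint hdisj, hT3,
      card_insert_of_notMem (by simp [hab0]), card_singleton]
  rw [← hRcard]
  set f : Finset V → V := fun t =>
    if h : (t \ {y, a0, b0} : Finset V).Nonempty then h.choose else a0 with hf
  have hfval : ∀ (t' : Finset V) (r : V), t' \ {y, a0, b0} = {r} → f t' = r := by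
    intro t' r hr
    have hne' : (t' \ {y, a0, b0} : Finset V).Nonempty := by
      rw [hr]; exact ⟨r, mem_singleton_self r⟩
    rw [hf]
    simp only [dif_pos hne']
    exact choose_eq _ hne' hr
  apply card_le_card_of_injOn f
  · intro t' ht'
    obtain ⟨c, r, hc, hrT, hr1, hr2, hry, hteq, hsd, hadj1, hadj2, hadj3⟩ := key t' ht'
    rw [hfval t' r hsd]
    simp only [mem_coe, mem_sdiff, mem_univ, mem_union, mem_insert, mem_singleton, true_and]
    push_neg
    exact ⟨hrT, hr1, hr2⟩
  · intro t1 h1 t2 h2 hf12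
    obtain ⟨c1, r1, hc1, hr1T, hr11, hr12, hr1y, ht1eq, hsd1, hyc1, hyr1, hc1r1⟩ := key t1 h1
    obtain ⟨c2, r2, hc2, hr2T, hr21, hr22, hr2y, ht2eq, hsd2, hyc2, hyr2, hc2r2⟩ := key t2 h2
    rw [hfval t1 r1 hsd1, hfval t2 r2 hsd2] at hf12
    subst hf12
    by_cases hcc : c1 = c2
    · rw [ht1eq, ht2eq, hcc]
    · exfalso
      have hc1c2 : G.Adj c1 c2 := by
        rcases hc1 with rfl | rfl <;> rcases hc2 with rfl | rfl
        · exact absurd rfl hcc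
        · exact ha0b0
        · exact ha0b0.symm
        · exact absurd rfl hcc
      exact k4_helper G hK4 hyc1 hyc2 hyr1 hc1c2 hc1r1 hc2r2

private lemma B_bound (G : SimpleGraph V) [DecidableRel G.Adj] (hK4 : G.CliqueFree 4)
    {T : Finset V} (hT : G.IsNClique 3 T) :
    ((G.cliqueFinset 3).filter (fun t => (t ∩ T).card = 2)).card ≤ Fintype.card V - 3 := by
  classical
  obtain ⟨x0, hx0⟩ : T.Nonempty := by
    rw [← card_pos, hT.2]; norm_num
  have key : ∀ t ∈ (G.cliqueFinset 3).filter (fun t => (t ∩ T).card = 2),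
      ∃ z : V, z ∉ T ∧ t \ T = {z} ∧ ∀ p ∈ t ∩ T, G.Adj z p := by
    intro t ht
    rw [mem_filter] at ht
    obtain ⟨htc, hti⟩ := ht
    have htn : G.IsNClique 3 t := (SimpleGraph.mem_cliqueFinset_iff).1 htc
    have h1 : (t \ T).card = 1 := by
      rw [← sdiff_inter_self_left t T, card_sdiff_of_subset inter_subset_left, htn.2, hti]
    obtain ⟨z, hz⟩ := card_eq_one.1 h1
    have hzm : z ∈ t \ T := hz ▸ mem_singleton_self z
    have hzt : z ∈ t := (mem_sdiff.1 hzm).1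
    have hzT : z ∉ T := (mem_sdiff.1 hzm).2
    refine ⟨z, hzT, hz, ?_⟩
    intro p hp
    have hpt : p ∈ t := (mem_inter.1 hp).1
    have hpT : p ∈ T := (mem_inter.1 hp).2
    exact htn.1 hzt hpt (fun h => hzT (h ▸ hpT))
  set f : Finset V → V := fun t => if h : (t \ T).Nonempty then h.choose else x0 with hf
  have hfval : ∀ (t : Finset V) (z : V), t \ T = {z} → f t = z := by
    intro t z hz
    have hne' : (t \ T).Nonempty := by rw [hz]; exact ⟨z, mem_singleton_self z⟩
    rw [hf]
    simp only [dif_pos hne']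
    exact choose_eq _ hne' hz
  have hcard : (univ \ T).card = Fintype.card V - 3 := by
    rw [card_sdiff_of_subset (subset_univ _), card_univ, hT.2]
  rw [← hcard]
  apply card_le_card_of_injOn f
  · intro t ht
    obtain ⟨z, hzT, hsd, _⟩ := key t ht
    rw [hfval t z hsd]
    simp [hzT]
  · intro t1 h1 t2 h2 hf12
    obtain ⟨z1, hz1T, hsd1, hadj1⟩ := key t1 h1
    obtain ⟨z2, hz2T, hsd2, hadj2⟩ := key t2 h2
    rw [hfval t1 z1 hsd1, hfval t2 z2 hsd2] at hf12
    subst hf12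
    by_cases hII : t1 ∩ T = t2 ∩ T
    · have e1 : t1 = (t1 \ T) ∪ (t1 ∩ T) := (sdiff_union_inter t1 T).symm
      have e2 : t2 = (t2 \ T) ∪ (t2 ∩ T) := (sdiff_union_inter t2 T).symm
      rw [e1, e2, hII, hsd1, hsd2]
    · exfalso
      -- the two 2-subsets of T are distinct, so their union is T
      have hs1 : t1 ∩ T ⊆ T := inter_subset_right
      have hs2 : t2 ∩ T ⊆ T := inter_subset_right
      have hc1 : (t1 ∩ T).card = 2 := (mem_filter.1 h1).2
      have hc2 : (t2 ∩ T).card = 2 := (mem_filter.1 h2).2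
      have hinter : ((t1 ∩ T) ∩ (t2 ∩ T)).card ≤ 1 := by
        by_contra hgt
        push_neg at hgt
        have : (t1 ∩ T) ∩ (t2 ∩ T) = t1 ∩ T :=
          eq_of_subset_of_card_le inter_subset_left (by omega)
        have hsub : t1 ∩ T ⊆ t2 ∩ T := by
          rw [← this]; exact inter_subset_right
        exact hII (eq_of_subset_of_card_le hsub (by omega))
      have hcu : 3 ≤ ((t1 ∩ T) ∪ (t2 ∩ T)).card := by
        have := card_union_add_card_inter (t1 ∩ T) (t2 ∩ T)
        omega
      have hunion : (t1 ∩ T) ∪ (t2 ∩ T) = T :=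
        eq_of_subset_of_card_le (union_subset hs1 hs2) (by rw [hT.2]; omega)
      apply k4_apex G hK4 hT hz1T
      intro p hp
      rw [← hunion, mem_union] at hp
      rcases hp with hp | hp
      · exact hadj1 p hp
      · exact hadj2 p hp

private lemma B_empty (G : SimpleGraph V) [DecidableRel G.Adj]
    (h2K3 : ¬ ∃ s t : Finset V, G.IsNClique 3 s ∧ G.IsNClique 3 t ∧ Disjoint s t)
    (hK4 : G.CliqueFree 4) {T : Finset V} (hT : G.IsNClique 3 T)
    (hall : ∀ z ∈ T, ((G.cliqueFinset 3).filter (fun t => t ∩ T = {z})).Nonempty) :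
    (G.cliqueFinset 3).filter (fun t => (t ∩ T).card = 2) = ∅ := by
  rw [eq_empty_iff_forall_notMem]
  intro t ht
  have htm := mem_filter.1 ht
  obtain ⟨htc, hti⟩ := htm
  have htn : G.IsNClique 3 t := (SimpleGraph.mem_cliqueFinset_iff).1 htc
  -- the vertex of T not in t
  have h1 : (T \ t).card = 1 := by
    rw [← sdiff_inter_self_left T t, card_sdiff_of_subset inter_subset_left, hT.2, inter_comm, hti]
  obtain ⟨z', hz'⟩ := card_eq_one.1 h1
  have hz'm : z' ∈ T \ t := hz' ▸ mem_singleton_self z'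
  have hz'T : z' ∈ T := (mem_sdiff.1 hz'm).1
  have hz't : z' ∉ t := (mem_sdiff.1 hz'm).2
  obtain ⟨t0, ht0⟩ := hall z' hz'T
  have ht0m := mem_filter.1 ht0
  obtain ⟨a, b, hab, haz, hbz, haT, hbT, ht0eq, hza, hzb, hab'⟩ :=
    tri_struct G ht0m.1 ht0m.2
  have ht0n : G.IsNClique 3 t0 := (SimpleGraph.mem_cliqueFinset_iff).1 ht0m.1
  have hnd : ¬ Disjoint t t0 := fun hd => h2K3 ⟨t, t0, htn, ht0n, hd⟩
  obtain ⟨e, het, het0⟩ := not_disjoint_iff.1 hnd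
  have hez : e ≠ z' := fun h => hz't (h ▸ het)
  have heab : e = a ∨ e = b := by
    rw [ht0eq] at het0
    simp only [mem_insert, mem_singleton] at het0
    tauto
  have heT : e ∉ T := by
    rcases heab with rfl | rfl
    · exact haT
    · exact hbT
  have hez' : G.Adj e z' := by
    rcases heab with rfl | rfl
    · exact hza.symm
    · exact hzb.symm
  -- insert z' (t ∩ T) = T
  have hins : insert z' (t ∩ T) = T := by
    apply eq_of_subset_of_card_le (insert_subset hz'T inter_subset_right)
    rw [card_insert_of_notMem (fun h => hz't (mem_inter.1 h).1), hti, hT.2]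
  apply k4_apex G hK4 hT heT
  intro p hp
  rw [← hins, mem_insert] at hp
  rcases hp with rfl | hp
  · exact hez'
  · exact htn.1 het (mem_inter.1 hp).1 (fun h => heT (h ▸ (mem_inter.1 hp).2))

end Stmt10Aux

/-- Let G be a 2K_3-free, K_4-free graph on n ≥ 6 vertices with a triangle
T = {u,v,w} such that every edge lies in a triangle, and suppose two edges of G - T lie
in triangles with two different vertices of T. Then G has at most 3n - 12 triangles. -/
theorem stmt10 {V : Type*} [Fintype V] [DecidableEq V] (G : SimpleGraph V)
    [DecidableRel G.Adj] (n : ℕ) (hcard : Fintype.card V = n) (hn : 6 ≤ n)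
    (u v w : V)
    (h2K3 : ¬ ∃ s t : Finset V, G.IsNClique 3 s ∧ G.IsNClique 3 t ∧ Disjoint s t)
    (hK4 : G.CliqueFree 4)
    (htri : G.Adj u v ∧ G.Adj v w ∧ G.Adj u w)
    (hedge : ∀ x y : V, G.Adj x y → ∃ z : V, G.Adj x z ∧ G.Adj y z)
    (hdiff : ∃ a b c d x y : V,
      a ∉ ({u, v, w} : Set V) ∧ b ∉ ({u, v, w} : Set V) ∧
      c ∉ ({u, v, w} : Set V) ∧ d ∉ ({u, v, w} : Set V) ∧
      x ∈ ({u, v, w} : Set V) ∧ y ∈ ({u, v, w} : Set V) ∧ x ≠ y ∧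
      G.Adj a b ∧ G.Adj c d ∧ G.Adj a x ∧ G.Adj b x ∧ G.Adj c y ∧ G.Adj d y) :
    (G.cliqueFinset 3).card ≤ 3 * n - 12 := by
  classical
  obtain ⟨huv, hvw, huw⟩ := htri
  set T : Finset V := {u, v, w} with hTdef
  have hTn : G.IsNClique 3 T := by
    rw [hTdef, SimpleGraph.is3Clique_triple_iff]
    exact ⟨huv, huw, hvw⟩
  have hT3 : T.card = 3 := hTn.2
  have hmemT : ∀ p : V, p ∈ T ↔ p = u ∨ p = v ∨ p = w := by
    intro p; simp [hTdef]
  have huT : u ∈ T := (hmemT u).2 (Or.inl rfl)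
  have hvT : v ∈ T := (hmemT v).2 (Or.inr (Or.inl rfl))
  have hwT : w ∈ T := (hmemT w).2 (Or.inr (Or.inr rfl))
  have hTadj : ∀ a ∈ T, ∀ b ∈ T, a ≠ b → G.Adj a b := by
    intro a ha b hb hne
    exact hTn.1 ha hb hne
  set A := (G.cliqueFinset 3).filter (fun t => (t ∩ T).card = 3) with hA
  set B := (G.cliqueFinset 3).filter (fun t => (t ∩ T).card = 2) with hB
  set D : V → Finset (Finset V) :=
    fun x => (G.cliqueFinset 3).filter (fun t => t ∩ T = {x}) with hD
  -- covering
  have hcover : G.cliqueFinset 3 ⊆ A ∪ B ∪ D u ∪ D v ∪ D w := by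
    intro t ht
    have htn : G.IsNClique 3 t := (SimpleGraph.mem_cliqueFinset_iff).1 ht
    have hle : (t ∩ T).card ≤ 3 := hT3 ▸ card_le_card inter_subset_right
    have hpos : (t ∩ T).card ≠ 0 := by
      intro h0
      have hd : Disjoint t T := by
        rw [Finset.disjoint_iff_inter_eq_empty]
        exact card_eq_zero.1 h0
      exact h2K3 ⟨t, T, htn, hTn, hd⟩
    simp only [mem_union]
    have h123 : (t ∩ T).card = 1 ∨ (t ∩ T).card = 2 ∨ (t ∩ T).card = 3 := by omega
    rcases h123 with h | h | h
    · obtain ⟨x, hx⟩ := card_eq_one.1 h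
      have hxT : x ∈ T := by
        have : x ∈ t ∩ T := hx ▸ mem_singleton_self x
        exact (mem_inter.1 this).2
      rcases (hmemT x).1 hxT with rfl | rfl | rfl
      · exact Or.inl (Or.inl (Or.inr (mem_filter.2 ⟨ht, hx⟩)))
      · exact Or.inl (Or.inr (mem_filter.2 ⟨ht, hx⟩))
      · exact Or.inr (mem_filter.2 ⟨ht, hx⟩)
    · exact Or.inl (Or.inl (Or.inl (Or.inr (mem_filter.2 ⟨ht, h⟩))))
    · exact Or.inl (Or.inl (Or.inl (Or.inl (mem_filter.2 ⟨ht, h⟩))))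
  have hcard_le : (G.cliqueFinset 3).card ≤
      A.card + B.card + (D u).card + (D v).card + (D w).card := by
    calc (G.cliqueFinset 3).card ≤ (A ∪ B ∪ D u ∪ D v ∪ D w).card := card_le_card hcover
      _ ≤ (A ∪ B ∪ D u ∪ D v).card + (D w).card := card_union_le _ _
      _ ≤ ((A ∪ B ∪ D u).card + (D v).card) + (D w).card :=
          by have := card_union_le (A ∪ B ∪ D u) (D v); omega
      _ ≤ (((A ∪ B).card + (D u).card) + (D v).card) + (D w).card :=
          by have := card_union_le (A ∪ B) (D u); omega
      _ ≤ ((((A.card + B.card) + (D u).card) + (D v).card) + (D w).card) :=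
          by have := card_union_le A B; omega
      _ = A.card + B.card + (D u).card + (D v).card + (D w).card := by ring
  -- A has at most one element
  have hAle : A.card ≤ 1 := by
    have hsub : A ⊆ {T} := by
      intro t ht
      have htm := mem_filter.1 ht
      have htn : G.IsNClique 3 t := (SimpleGraph.mem_cliqueFinset_iff).1 htm.1
      have h1 : t ∩ T = t := eq_of_subset_of_card_le inter_subset_left (by rw [htm.2, htn.2])
      have h2 : t ⊆ T := h1 ▸ inter_subset_right
      rw [mem_singleton]
      exact eq_of_subset_of_card_le h2 (by rw [htn.2, hT3])
    exact le_trans (card_le_card hsub) (by simp)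
  -- D x and D y nonempty from hdiff
  obtain ⟨a, b, c, d, x, y, haT, hbT, hcT, hdT, hxT, hyT, hxy, hab, hcd,
    hax, hbx, hcy, hdy⟩ := hdiff
  have hsetT : ∀ p : V, p ∈ ({u, v, w} : Set V) ↔ p ∈ T := by
    intro p; simp [hTdef]
  have hxT' : x ∈ T := (hsetT x).1 hxT
  have hyT' : y ∈ T := (hsetT y).1 hyT
  have haT' : a ∉ T := fun h => haT ((hsetT a).2 h)
  have hbT' : b ∉ T := fun h => hbT ((hsetT b).2 h)
  have hcT' : c ∉ T := fun h => hcT ((hsetT c).2 h)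
  have hdT' : d ∉ T := fun h => hdT ((hsetT d).2 h)
  have hDx : (D x).Nonempty := ⟨{x, a, b}, mem_Dset G hxT' haT' hbT' hax.symm hbx.symm hab⟩
  have hDy : (D y).Nonempty := ⟨{y, c, d}, mem_Dset G hyT' hcT' hdT' hcy.symm hdy.symm hcd⟩
  by_cases hall : ∀ z ∈ T, (D z).Nonempty
  · -- all three nonempty : B is empty, each D is small
    have hBe : B.card = 0 := by
      rw [hB, B_empty G h2K3 hK4 hTn hall, card_empty]
    have hbound : ∀ p ∈ T, ∀ q ∈ T, p ≠ q → (D q).card ≤ n - 5 := by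
      intro p hp q hq hpq
      have := D_bound G h2K3 hK4 hT3 hp hq hpq (hTadj p hp q hq hpq) (hall p hp)
      rwa [hcard] at this
    have h1 : (D u).card ≤ n - 5 := hbound v hvT u huT huv.ne'
    have h2 : (D v).card ≤ n - 5 := hbound u huT v hvT huv.ne
    have h3 : (D w).card ≤ n - 5 := hbound u huT w hwT huw.ne
    omega
  · -- some D z is empty
    push_neg at hall
    obtain ⟨z, hzT, hzE⟩ := hall
    have hzx : z ≠ x := by
      intro h
      rw [h] at hzE
      rw [hzE] at hDx
      exact not_nonempty_empty hDx
    have hzy : z ≠ y := by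
      intro h
      rw [h] at hzE
      rw [hzE] at hDy
      exact not_nonempty_empty hDy
    have hsumT : ∀ (p q r : V), p ≠ q → p ≠ r → q ≠ r →
        ∑ s ∈ ({p, q, r} : Finset V), (D s).card =
          (D p).card + (D q).card + (D r).card := by
      intro p q r h1 h2 h3
      rw [sum_insert (by simp only [mem_insert, mem_singleton]; push_neg; exact ⟨h1, h2⟩),
        sum_insert (by simpa using h3), sum_singleton]
      ring
    have hxyz : ({x, y, z} : Finset V) = T := by
      apply eq_of_subset_of_card_le
      · exact insert_subset hxT' (insert_subset hyT' (singleton_subset_iff.2 hzT))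
      · rw [hT3, card_insert_of_notMem (by
          simp only [mem_insert, mem_singleton]
          push_neg
          exact ⟨hxy, fun h => hzx h.symm⟩),
          card_insert_of_notMem (by simpa using fun h => hzy h.symm), card_singleton]
    have e1 : ∑ p ∈ T, (D p).card = (D u).card + (D v).card + (D w).card := by
      rw [hTdef]
      exact hsumT u v w huv.ne huw.ne hvw.ne
    have e2 : ∑ p ∈ T, (D p).card = (D x).card + (D y).card + (D z).card := by
      rw [← hxyz]
      exact hsumT x y z hxy (fun h => hzx h.symm) (fun h => hzy h.symm)
    have hsum : (D u).card + (D v).card + (D w).card =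
        (D x).card + (D y).card + (D z).card := e1.symm.trans e2
    have hx5 : (D x).card ≤ n - 5 := by
      have := D_bound G h2K3 hK4 hT3 hyT' hxT' hxy.symm
        (hTadj y hyT' x hxT' hxy.symm) hDy
      rwa [hcard] at this
    have hy5 : (D y).card ≤ n - 5 := by
      have := D_bound G h2K3 hK4 hT3 hxT' hyT' hxy (hTadj x hxT' y hyT' hxy) hDx
      rwa [hcard] at this
    have hBle : B.card ≤ n - 3 := by
      have := B_bound G hK4 hTn
      rwa [hB, ← hcard]
    have hz0 : (D z).card = 0 := by rw [hzE, card_empty]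
    omega
end

section
/- Let G be a 2K_3-free graph on n vertices that contains a 5-clique, such that every edge of G is contained in at least one triangle. Then G is isomorphic to the disjoint union of K_5 with n-5 isolated vertices. -/
/-- Let G be a 2K_3-free graph containing a 5-clique, in which every edge
lies in a triangle. Then G is a 5-clique together with isolated vertices: there is a
5-clique s such that every edge of G has both endpoints in s. -/
theorem stmt11 {V : Type*} [DecidableEq V] (G : SimpleGraph V)
    (h2K3 : ¬ ∃ s t : Finset V, G.IsNClique 3 s ∧ G.IsNClique 3 t ∧ Disjoint s t)
    (hK5 : ∃ s : Finset V, G.IsNClique 5 s)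
    (hedge : ∀ x y : V, G.Adj x y → ∃ z : V, G.Adj x z ∧ G.Adj y z) :
    ∃ s : Finset V, G.IsNClique 5 s ∧ ∀ x y : V, G.Adj x y → x ∈ s ∧ y ∈ s := by
  obtain ⟨s, hs⟩ := hK5
  refine ⟨s, hs, ?_⟩
  have key : ∀ x y : V, G.Adj x y → x ∈ s := by
    intro x y hxy
    by_contra hx
    obtain ⟨z, hxz, hyz⟩ := hedge x y hxy
    set t : Finset V := {x, y, z} with ht
    have htclique : G.IsNClique 3 t := by
      rw [ht, SimpleGraph.is3Clique_triple_iff]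
      exact ⟨hxy, hxz, hyz⟩
    have hst : s ∩ t ⊆ {y, z} := by
      intro a ha
      simp only [Finset.mem_inter, ht, Finset.mem_insert, Finset.mem_singleton] at ha ⊢
      rcases ha.2 with rfl | h
      · exact absurd ha.1 hx
      · exact h
    have hcard : 3 ≤ (s \ t).card := by
      have h1 : (s ∩ t).card ≤ 2 := le_trans (Finset.card_le_card hst)
        (le_trans (Finset.card_insert_le _ _) (by simp))
      have h2 := Finset.card_sdiff_add_card_inter s t
      rw [hs.card_eq] at h2
      omega
    obtain ⟨u, hu, hucard⟩ := Finset.exists_subset_card_eq hcard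
    refine h2K3 ⟨u, t, ⟨hs.isClique.subset (hu.trans (Finset.sdiff_subset)), hucard⟩,
      htclique, ?_⟩
    exact Finset.disjoint_of_subset_left hu Finset.sdiff_disjoint
  exact fun x y hxy => ⟨key x y hxy, key y x hxy.symm⟩
end

section
/- Let G be a K_5-free, 2K_3-free graph on n vertices in which every edge lies in a triangle, containing a 4-clique L = {u, v, u_1, v_1}. Then the induced subgraph G[V(G) \ L] has no edges, i.e., it is a union of isolated vertices. -/
/-!
The edge `ab` lies in a triangle `abz`. Whether or not `z` belongs to the 4-clique `L`,
three vertices of `L` other than `z` form a triangle, and it is disjoint from `abz` unless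
`a` or `b` lies in `L`.
-/

namespace SimpleGraph

variable {V : Type*} [DecidableEq V] {G : SimpleGraph V}

theorem IsNClique.exists_isNClique_three_subset_notMem {s : Finset V}
    (hs : G.IsNClique 4 s) (z : V) : ∃ t ⊆ s, G.IsNClique 3 t ∧ z ∉ t := by
  have hcard : 3 ≤ (s.erase z).card := by
    have := Finset.pred_card_le_card_erase (s := s) (a := z)
    rw [hs.card_eq] at this
    omega
  obtain ⟨t, hts, ht⟩ := Finset.exists_subset_card_eq hcard
  have hts' : t ⊆ s := hts.trans (Finset.erase_subset z s)
  exact ⟨t, hts', ⟨hs.isClique.subset (by exact_mod_cast hts'), ht⟩,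
    fun hz => Finset.notMem_erase z s (hts hz)⟩

theorem mem_or_mem_of_adj_of_isNClique_four
    (h2K3 : ¬ ∃ s t : Finset V, G.IsNClique 3 s ∧ G.IsNClique 3 t ∧ Disjoint s t)
    (hedge : ∀ x y : V, G.Adj x y → ∃ z : V, G.Adj x z ∧ G.Adj y z)
    {L : Finset V} (hL : G.IsNClique 4 L) {a b : V} (hab : G.Adj a b) :
    a ∈ L ∨ b ∈ L := by
  obtain ⟨z, haz, hbz⟩ := hedge a b hab
  obtain ⟨t, htL, ht, hzt⟩ := hL.exists_isNClique_three_subset_notMem z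
  by_contra! hout
  refine h2K3 ⟨{a, b, z}, t, is3Clique_triple_iff.mpr ⟨hab, haz, hbz⟩, ht, ?_⟩
  rw [Finset.disjoint_insert_left, Finset.disjoint_insert_left, Finset.disjoint_singleton_left]
  exact ⟨fun ha => hout.1 (htL ha), fun hb => hout.2 (htL hb), hzt⟩

end SimpleGraph

theorem stmt12_general {V : Type*} [DecidableEq V] (G : SimpleGraph V) (u v u₁ v₁ : V)
    (h2K3 : ¬ ∃ s t : Finset V, G.IsNClique 3 s ∧ G.IsNClique 3 t ∧ Disjoint s t)
    (hedge : ∀ x y : V, G.Adj x y → ∃ z : V, G.Adj x z ∧ G.Adj y z)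
    (hL : G.IsNClique 4 ({u, v, u₁, v₁} : Finset V)) :
    ∀ a b : V, a ∉ ({u, v, u₁, v₁} : Finset V) → b ∉ ({u, v, u₁, v₁} : Finset V) →
      ¬ G.Adj a b := fun _ _ ha hb hab =>
  (SimpleGraph.mem_or_mem_of_adj_of_isNClique_four h2K3 hedge hL hab).elim ha hb

/-- Let G be a K_5-free, 2K_3-free graph in which every edge lies in a
triangle, containing a 4-clique L = {u, v, u₁, v₁}. Then the induced subgraph on
V(G) \ L has no edges. -/
theorem stmt12 {V : Type*} [DecidableEq V] (G : SimpleGraph V) (u v u₁ v₁ : V)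
    (hK5 : G.CliqueFree 5)
    (h2K3 : ¬ ∃ s t : Finset V, G.IsNClique 3 s ∧ G.IsNClique 3 t ∧ Disjoint s t)
    (hedge : ∀ x y : V, G.Adj x y → ∃ z : V, G.Adj x z ∧ G.Adj y z)
    (hL : G.IsNClique 4 ({u, v, u₁, v₁} : Finset V)) :
    ∀ a b : V, a ∉ ({u, v, u₁, v₁} : Finset V) → b ∉ ({u, v, u₁, v₁} : Finset V) →
      ¬ G.Adj a b :=
  stmt12_general G u v u₁ v₁ h2K3 hedge hL
end

section
/- Let n ≥ 5 and define μ = (cbrt(√3(n-3) + √(3(n-3)² − 1/27)) + cbrt(√3(n-3) − √(3(n-3)² − 1/27)))². Then μ satisfies the system: there exist positive reals x₁, x₂ with μ·x₁² = x₁² + 2(n-3)·x₁·x₂ and μ·x₂² = 3·x₁². -/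
/-!
Put m = n - 3, c = √3·m and d = √(3m² − 1/27). Cardano's formula says that
t = ∛(c + d) + ∛(c − d) is a root of t³ = 3·∛(c² − d²)·t + 2c = t + 2√3·m,
so μ = t². Then x₁ = t, x₂ = √3 solves the system: the first equation is the cubic
multiplied by t, the second reads 3t² = 3t².
-/

open Real

lemma rpow_one_third_pow_three {x : ℝ} (hx : 0 ≤ x) : (x ^ ((1 : ℝ) / 3)) ^ 3 = x := by
  rw [one_div]
  exact_mod_cast rpow_inv_natCast_pow hx (n := 3) (by norm_num)

lemma cardano_sum_cube {c d : ℝ} (hd : 0 ≤ d) (hdc : d ≤ c) :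
    ((c + d) ^ ((1 : ℝ) / 3) + (c - d) ^ ((1 : ℝ) / 3)) ^ 3
      = 3 * (c ^ 2 - d ^ 2) ^ ((1 : ℝ) / 3)
          * ((c + d) ^ ((1 : ℝ) / 3) + (c - d) ^ ((1 : ℝ) / 3)) + 2 * c := by
  have hplus : 0 ≤ c + d := by linarith
  have hminus : 0 ≤ c - d := by linarith
  have hprod : (c ^ 2 - d ^ 2) ^ ((1 : ℝ) / 3)
      = (c + d) ^ ((1 : ℝ) / 3) * (c - d) ^ ((1 : ℝ) / 3) := by
    rw [← mul_rpow hplus hminus]; ring_nf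
  rw [hprod]
  linear_combination rpow_one_third_pow_three hplus + rpow_one_third_pow_three hminus

lemma exists_pos_solution_of_cubic {a k t : ℝ} (ha : 0 < a) (ht : 0 < t)
    (hcubic : t ^ 3 = t + 2 * √a * k) :
    ∃ x₁ x₂ : ℝ, 0 < x₁ ∧ 0 < x₂ ∧
      t ^ 2 * x₁ ^ 2 = x₁ ^ 2 + 2 * k * x₁ * x₂ ∧ t ^ 2 * x₂ ^ 2 = a * x₁ ^ 2 := by
  refine ⟨t, √a, ht, sqrt_pos.mpr ha, ?_, ?_⟩
  · linear_combination t * hcubic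
  · rw [sq_sqrt ha.le]; ring

/-- For n ≥ 5, the number
μ = (cbrt(√3(n-3) + √(3(n-3)² − 1/27)) + cbrt(√3(n-3) − √(3(n-3)² − 1/27)))²
satisfies the eigenvalue system: there are positive reals x₁, x₂ with
μ·x₁² = x₁² + 2(n-3)·x₁·x₂ and μ·x₂² = 3·x₁². (Both cube-root arguments are
nonnegative, so the real cube root is expressed via rpow (1/3).) -/
theorem stmt15 (n : ℕ) (hn : 5 ≤ n) :
    ∃ x₁ x₂ : ℝ, 0 < x₁ ∧ 0 < x₂ ∧
      ((Real.sqrt 3 * ((n : ℝ) - 3) + Real.sqrt (3 * ((n : ℝ) - 3) ^ 2 - 1 / 27)) ^ ((1 : ℝ) / 3)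
        + (Real.sqrt 3 * ((n : ℝ) - 3) - Real.sqrt (3 * ((n : ℝ) - 3) ^ 2 - 1 / 27)) ^ ((1 : ℝ) / 3)) ^ 2
          * x₁ ^ 2 = x₁ ^ 2 + 2 * ((n : ℝ) - 3) * x₁ * x₂ ∧
      ((Real.sqrt 3 * ((n : ℝ) - 3) + Real.sqrt (3 * ((n : ℝ) - 3) ^ 2 - 1 / 27)) ^ ((1 : ℝ) / 3)
        + (Real.sqrt 3 * ((n : ℝ) - 3) - Real.sqrt (3 * ((n : ℝ) - 3) ^ 2 - 1 / 27)) ^ ((1 : ℝ) / 3)) ^ 2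
          * x₂ ^ 2 = 3 * x₁ ^ 2 := by
  set m : ℝ := (n : ℝ) - 3
  have hm : 2 ≤ m := by
    have : (5 : ℝ) ≤ n := by exact_mod_cast hn
    linarith
  set c := √3 * m
  set d := √(3 * m ^ 2 - 1 / 27)
  have hc_sq : c ^ 2 = 3 * m ^ 2 := by rw [mul_pow, sq_sqrt (by norm_num)]
  have hd_sq : d ^ 2 = 3 * m ^ 2 - 1 / 27 := sq_sqrt (by nlinarith)
  have hc : 0 < c := by positivity
  have hd : 0 ≤ d := sqrt_nonneg _
  have hdc : d ≤ c := (sq_le_sq₀ hd hc.le).mp (by linarith)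
  have hcd : (c ^ 2 - d ^ 2) ^ ((1 : ℝ) / 3) = 1 / 3 := by
    rw [hc_sq, hd_sq, show 3 * m ^ 2 - (3 * m ^ 2 - 1 / 27) = (1 / 3 : ℝ) ^ (3 : ℝ) by norm_num,
      ← rpow_mul (by norm_num)]
    norm_num
  have ht : 0 < (c + d) ^ ((1 : ℝ) / 3) + (c - d) ^ ((1 : ℝ) / 3) :=
    add_pos_of_pos_of_nonneg (rpow_pos_of_pos (by linarith) _) (rpow_nonneg (by linarith) _)
  refine exists_pos_solution_of_cubic (by norm_num) ht ?_
  rw [cardano_sum_cube hd hdc, hcd]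
  ring
end

section
/- Let G be a 2K_3-free graph in which every edge lies in a triangle, with a triangle {u,v,w} such that every edge of G - {u,v,w} forms a triangle only with u (never with v or w), and suppose G - {u,v,w} has at least one edge. Then no vertex of G - {u,v,w} forms a triangle with both v and w; consequently all triangles of G contain the vertex u. -/
/-! Any two triangles meet. An edge `ab` outside `{u, v, w}` lies in a triangle `abz`, which must
meet `uvw` in `z`, and `z ∉ {v, w}`, so `z = u`. Hence a vertex `x ∉ {u, v, w}` adjacent to `v` and
`w` would span a `K₄` with `u, v, w` if `x ∈ {a, b}`, and a triangle `xvw` disjoint from `abu`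
otherwise. Finally, a triangle avoiding `u` meets `uvw` in `v`, say; its other two vertices either
include `w`, which makes the third one a common neighbour of `v` and `w`, or form an edge outside
`{u, v, w}` in a triangle with `v`. -/

namespace SimpleGraph

/-- `G` is `2K₃`-free. -/
def TwoTriangleFree {V : Type*} (G : SimpleGraph V) : Prop :=
  ¬ ∃ s t : Finset V, G.IsNClique 3 s ∧ G.IsNClique 3 t ∧ Disjoint s t

lemma TwoTriangleFree.exists_mem_mem {V : Type*} {G : SimpleGraph V} (hG : TwoTriangleFree G)
    {s t : Finset V} (hs : G.IsNClique 3 s) (ht : G.IsNClique 3 t) : ∃ x ∈ s, x ∈ t :=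
  Finset.not_disjoint_iff.1 fun hst => hG ⟨s, t, hs, ht, hst⟩

section

variable {V : Type*} [DecidableEq V] {G : SimpleGraph V} {u v w : V}

lemma IsNClique.exists_eq_triple_of_mem {s : Finset V} (hs : G.IsNClique 3 s) (hv : v ∈ s) :
    ∃ a b, G.Adj v a ∧ G.Adj v b ∧ G.Adj a b ∧ s = {v, a, b} := by
  obtain ⟨p, q, r, hpq, hpr, hqr, rfl⟩ := is3Clique_iff.1 hs
  simp only [Finset.mem_insert, Finset.mem_singleton] at hv
  rcases hv with rfl | rfl | rfl
  · exact ⟨q, r, hpq, hpr, hqr, rfl⟩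
  · exact ⟨p, r, hpq.symm, hqr, hpr, Finset.insert_comm _ _ _⟩
  · refine ⟨p, q, hpr.symm, hqr.symm, hpq, ?_⟩
    rw [Finset.pair_comm, Finset.insert_comm]

lemma adj_of_adj_of_not_mem (hG : TwoTriangleFree G)
    (hedge : ∀ x y : V, G.Adj x y → ∃ z : V, G.Adj x z ∧ G.Adj y z)
    (huvw : G.IsNClique 3 {u, v, w})
    (honlyu : ∀ a b : V, a ∉ ({u, v, w} : Set V) → b ∉ ({u, v, w} : Set V) → G.Adj a b →
      ¬ (G.Adj a v ∧ G.Adj b v) ∧ ¬ (G.Adj a w ∧ G.Adj b w))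
    {a b : V} (ha : a ∉ ({u, v, w} : Set V)) (hb : b ∉ ({u, v, w} : Set V)) (hab : G.Adj a b) :
    G.Adj u a ∧ G.Adj u b := by
  obtain ⟨z, haz, hbz⟩ := hedge a b hab
  have habz : G.IsNClique 3 {a, b, z} := is3Clique_triple_iff.2 ⟨hab, haz, hbz⟩
  obtain ⟨y, hy, hyuvw⟩ := hG.exists_mem_mem habz huvw
  have honly := honlyu a b ha hb hab
  simp only [Set.mem_insert_iff, Set.mem_singleton_iff, not_or] at ha hb
  simp only [Finset.mem_insert, Finset.mem_singleton] at hy hyuvw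
  rcases hy with rfl | rfl | rfl
  · tauto
  · tauto
  · rcases hyuvw with rfl | rfl | rfl
    · exact ⟨haz.symm, hbz.symm⟩
    · exact (honly.1 ⟨haz, hbz⟩).elim
    · exact (honly.2 ⟨haz, hbz⟩).elim

lemma not_adj_and_adj_of_not_mem (hG : TwoTriangleFree G) (hK4 : G.CliqueFree 4)
    (huv : G.Adj u v) (hvw : G.Adj v w) (huw : G.Adj u w) {a b : V}
    (ha : a ∉ ({u, v, w} : Set V)) (hb : b ∉ ({u, v, w} : Set V)) (hab : G.Adj a b)
    (hua : G.Adj u a) (hub : G.Adj u b) {x : V} (hx : x ∉ ({u, v, w} : Set V)) :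
    ¬ (G.Adj x v ∧ G.Adj x w) := by
  rintro ⟨hxv, hxw⟩
  by_cases hxab : x = a ∨ x = b
  · have hux : G.Adj u x := by rcases hxab with rfl | rfl <;> assumption
    have huvw : G.IsNClique 3 {u, v, w} := is3Clique_triple_iff.2 ⟨huv, huw, hvw⟩
    refine hK4 (insert x {u, v, w}) (huvw.insert fun y hy => ?_)
    simp only [Finset.mem_insert, Finset.mem_singleton] at hy
    rcases hy with rfl | rfl | rfl <;> first | exact hux.symm | assumption
  · have habu : G.IsNClique 3 {a, b, u} := is3Clique_triple_iff.2 ⟨hab, hua.symm, hub.symm⟩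
    have hxvw : G.IsNClique 3 {x, v, w} := is3Clique_triple_iff.2 ⟨hxv, hxw, hvw⟩
    obtain ⟨y, hy, hy'⟩ := hG.exists_mem_mem habu hxvw
    simp only [Set.mem_insert_iff, Set.mem_singleton_iff, not_or] at ha hb hx
    simp only [Finset.mem_insert, Finset.mem_singleton] at hy hy'
    rcases hy with rfl | rfl | rfl
    · tauto
    · tauto
    · rcases hy' with rfl | rfl | rfl
      · exact hx.1 rfl
      · exact huv.ne rfl
      · exact huw.ne rfl

lemma mem_of_is3Clique_of_mem
    (hcommon : ∀ x : V, x ∉ ({u, v, w} : Set V) → ¬ (G.Adj x v ∧ G.Adj x w))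
    (hv_only : ∀ a b : V, a ∉ ({u, v, w} : Set V) → b ∉ ({u, v, w} : Set V) → G.Adj a b →
      ¬ (G.Adj a v ∧ G.Adj b v))
    {s : Finset V} (hs : G.IsNClique 3 s) (hv : v ∈ s) : u ∈ s := by
  obtain ⟨a, b, hva, hvb, hab, rfl⟩ := hs.exists_eq_triple_of_mem hv
  by_contra hu
  simp only [Finset.mem_insert, Finset.mem_singleton, not_or] at hu
  have houtside : ∀ y, y ≠ u → y ≠ v → y ≠ w → y ∉ ({u, v, w} : Set V) := by simp_all
  by_cases haw : a = w
  · subst haw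
    exact hcommon b (houtside b (Ne.symm hu.2.2) hvb.ne' hab.ne') ⟨hvb.symm, hab.symm⟩
  by_cases hbw : b = w
  · subst hbw
    exact hcommon a (houtside a (Ne.symm hu.2.1) hva.ne' hab.ne) ⟨hva.symm, hab⟩
  exact hv_only a b (houtside a (Ne.symm hu.2.1) hva.ne' haw)
    (houtside b (Ne.symm hu.2.2) hvb.ne' hbw) hab ⟨hva.symm, hvb.symm⟩

end

end SimpleGraph

open SimpleGraph in
/-- Let G be 2K_3-free and K_4-free, with every edge in a triangle, and a
triangle {u,v,w} such that every edge of G - {u,v,w} forms a triangle only with u (never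
with v or w), and G - {u,v,w} has at least one edge. Then no vertex of G - {u,v,w} forms
a triangle with both v and w; consequently every triangle of G contains u. -/
theorem stmt18 {V : Type*} [DecidableEq V] (G : SimpleGraph V) (u v w : V)
    (h2K3 : ¬ ∃ s t : Finset V, G.IsNClique 3 s ∧ G.IsNClique 3 t ∧ Disjoint s t)
    (hK4 : G.CliqueFree 4)
    (hedge : ∀ x y : V, G.Adj x y → ∃ z : V, G.Adj x z ∧ G.Adj y z)
    (htri : G.Adj u v ∧ G.Adj v w ∧ G.Adj u w)
    (honlyu : ∀ a b : V, a ∉ ({u, v, w} : Set V) → b ∉ ({u, v, w} : Set V) → G.Adj a b →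
      ¬ (G.Adj a v ∧ G.Adj b v) ∧ ¬ (G.Adj a w ∧ G.Adj b w))
    (hasEdge : ∃ a b : V, a ∉ ({u, v, w} : Set V) ∧ b ∉ ({u, v, w} : Set V) ∧ G.Adj a b) :
    (∀ x : V, x ∉ ({u, v, w} : Set V) → ¬ (G.Adj x v ∧ G.Adj x w)) ∧
    (∀ s : Finset V, G.IsNClique 3 s → u ∈ s) := by
  obtain ⟨huv, hvw, huw⟩ := htri
  have huvw : G.IsNClique 3 {u, v, w} := is3Clique_triple_iff.2 ⟨huv, huw, hvw⟩
  obtain ⟨a, b, ha, hb, hab⟩ := hasEdge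
  obtain ⟨hua, hub⟩ := adj_of_adj_of_not_mem h2K3 hedge huvw honlyu ha hb hab
  have hcommon : ∀ x : V, x ∉ ({u, v, w} : Set V) → ¬ (G.Adj x v ∧ G.Adj x w) :=
    fun x hx => not_adj_and_adj_of_not_mem h2K3 hK4 huv hvw huw ha hb hab hua hub hx
  refine ⟨hcommon, fun s hs => ?_⟩
  have hswap : ({u, w, v} : Set V) = {u, v, w} := by rw [Set.pair_comm]
  obtain ⟨y, hys, hy⟩ := TwoTriangleFree.exists_mem_mem h2K3 hs huvw
  simp only [Finset.mem_insert, Finset.mem_singleton] at hy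
  rcases hy with hyu | hyv | hyw
  · exact hyu ▸ hys
  · exact mem_of_is3Clique_of_mem hcommon (fun a b ha hb hab => (honlyu a b ha hb hab).1) hs
      (hyv ▸ hys)
  · refine mem_of_is3Clique_of_mem (v := w) (w := v) (fun x hx => ?_)
      (fun a b ha hb hab => (honlyu a b (hswap ▸ ha) (hswap ▸ hb) hab).2) hs (hyw ▸ hys)
    rw [and_comm]
    exact hcommon x (hswap ▸ hx)
end
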